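/- Let μ be a partition, s ≥ 0 an integer, and n an integer with n > 2s and n ≥ |μ| + μ_1. Then the map φ, which adds a box labeled n+1 at the end of the first row, is a bijection from the set { T a standard Young tableau of shape μ[n] : maj(T) ≤ s } onto the set { U a standard Young tableau of shape μ[n+1] : maj(U) ≤ s }. -/

import Mathlib

/-- The cells of the padded partition `μ[n] = (n - |μ|, μ₁, μ₂, …)`:
the first row has `n - |μ|` boxes, and row `i+1` is row `i` of `μ`. -/
def paddedCells (μ : YoungDiagram) (n : ℕ) : Finset (ℕ × ℕ) :=
  ((Finset.range (n - μ.card)).image fun j => ((0 : ℕ), j)) ∪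
    (μ.cells.image fun c => (c.1 + 1, c.2))

/-- `T` is a standard Young tableau filling of the cell set `cells`:
it restricts to a bijection from the cells onto `{1, …, #cells}`,
is strictly increasing along rows and down columns, and is `0` off the cells. -/
structure IsSYT (cells : Finset (ℕ × ℕ)) (T : ℕ × ℕ → ℕ) : Prop where
  bijOn : Set.BijOn T ↑cells (Set.Icc 1 cells.card)
  row_strict : ∀ c1 ∈ cells, ∀ c2 ∈ cells, c1.1 = c2.1 → c1.2 < c2.2 → T c1 < T c2
  col_strict : ∀ c1 ∈ cells, ∀ c2 ∈ cells, c1.2 = c2.2 → c1.1 < c2.1 → T c1 < T c2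
  zeros : ∀ c, c ∉ cells → T c = 0

open Classical in
/-- The descent set of a filling: those `i` such that `i` appears in a row strictly
above (smaller row index than) the row containing `i + 1`. -/
noncomputable def descents (cells : Finset (ℕ × ℕ)) (T : ℕ × ℕ → ℕ) : Finset ℕ :=
  (Finset.range (cells.card + 1)).filter fun i =>
    ∃ c1 ∈ cells, ∃ c2 ∈ cells, T c1 = i ∧ T c2 = i + 1 ∧ c1.1 < c2.1

/-- `des T`, the number of descents. -/
noncomputable def desN (cells : Finset (ℕ × ℕ)) (T : ℕ × ℕ → ℕ) : ℕ :=
  (descents cells T).card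

/-- `maj T`, the sum of the descents. -/
noncomputable def majN (cells : Finset (ℕ × ℕ)) (T : ℕ × ℕ → ℕ) : ℕ :=
  ∑ i ∈ descents cells T, i

/-!
The new entry `n + 1` sits at the end of the first row, so it creates no descent: `φ` preserves
`maj`, and it is injective because it only overwrites the value at a cell outside `μ[n]`.

For surjectivity let `maj U ≤ s`. Then `U` has no descent `≥ s + 1`, so among the entries
`s + 1, …, n + 1` a larger entry never lies in a lower row. If `n + 1` were not in the first row,
every entry `> s` would therefore lie directly below an entry `≤ s`, giving `n + 1 - s ≤ s`,
which contradicts `2s < n`. Hence `n + 1` lies in the first row, necessarily at its end, and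
erasing it inverts `φ`.
-/

open Function

section PaddedCells

variable {μ : YoungDiagram} {n : ℕ}

lemma mem_paddedCells {c : ℕ × ℕ} :
    c ∈ paddedCells μ n ↔
      (c.1 = 0 ∧ c.2 < n - μ.card) ∨ (1 ≤ c.1 ∧ (c.1 - 1, c.2) ∈ μ) := by
  obtain ⟨i, j⟩ := c
  simp only [paddedCells, Finset.mem_union, Finset.mem_image, Finset.mem_range,
    YoungDiagram.mem_cells, Prod.mk.injEq]
  constructor
  · rintro (⟨k, hk, rfl, rfl⟩ | ⟨⟨a, b⟩, hab, rfl, rfl⟩)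
    · exact Or.inl ⟨rfl, hk⟩
    · exact Or.inr ⟨by omega, by simpa using hab⟩
  · rintro (⟨rfl, hj⟩ | ⟨hi, hm⟩)
    · exact Or.inl ⟨j, hj, rfl, rfl⟩
    · exact Or.inr ⟨(i - 1, j), hm, by omega, rfl⟩

lemma card_paddedCells (h : μ.card ≤ n) : (paddedCells μ n).card = n := by
  have hdisj : Disjoint ((Finset.range (n - μ.card)).image fun j => ((0 : ℕ), j))
      (μ.cells.image fun c => (c.1 + 1, c.2)) := by
    simp only [Finset.disjoint_left, Finset.mem_image]
    rintro _ ⟨j, -, rfl⟩ ⟨c, -, hc⟩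
    simp at hc
  have hshift : Injective fun c : ℕ × ℕ => (c.1 + 1, c.2) := fun a b h => by
    simp only [Prod.mk.injEq, add_left_inj] at h
    exact Prod.ext h.1 h.2
  rw [paddedCells, Finset.card_union_of_disjoint hdisj,
    Finset.card_image_of_injective _ (Prod.mk_right_injective 0),
    Finset.card_image_of_injective _ hshift, Finset.card_range]
  exact Nat.sub_add_cancel h

lemma paddedCells_succ (h : μ.card ≤ n) :
    paddedCells μ (n + 1) = insert (0, n - μ.card) (paddedCells μ n) := by
  rw [paddedCells, paddedCells, Nat.sub_add_comm h, Finset.range_add_one, Finset.image_insert,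
    Finset.insert_union]

lemma snd_lt_of_mem_paddedCells (h : μ.card + μ.rowLen 0 ≤ n) {c : ℕ × ℕ}
    (hc : c ∈ paddedCells μ n) : c.2 < n - μ.card := by
  rcases mem_paddedCells.mp hc with ⟨-, hj⟩ | ⟨-, hm⟩
  · exact hj
  · have := YoungDiagram.mem_iff_lt_rowLen.mp hm
    have := μ.rowLen_anti 0 (c.1 - 1) (Nat.zero_le _)
    omega

lemma mem_paddedCells_of_succ_mem (h : μ.card + μ.rowLen 0 ≤ n) {i j : ℕ}
    (hc : (i + 1, j) ∈ paddedCells μ n) : (i, j) ∈ paddedCells μ n := by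
  rcases mem_paddedCells.mp hc with ⟨h0, -⟩ | ⟨-, hm⟩
  · omega
  · rw [Nat.add_sub_cancel] at hm
    rcases Nat.eq_zero_or_pos i with rfl | hi
    · have := YoungDiagram.mem_iff_lt_rowLen.mp hm
      exact mem_paddedCells.mpr (Or.inl ⟨rfl, by omega⟩)
    · exact mem_paddedCells.mpr (Or.inr ⟨hi, μ.up_left_mem (by omega) le_rfl hm⟩)

end PaddedCells

namespace IsSYT

variable {cells : Finset (ℕ × ℕ)} {T U : ℕ × ℕ → ℕ} {j s : ℕ}

lemma apply_mem_Icc (hT : IsSYT cells T) {c : ℕ × ℕ} (hc : c ∈ cells) :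
    T c ∈ Set.Icc 1 cells.card :=
  hT.bijOn.mapsTo hc

lemma exists_apply_eq (hT : IsSYT cells T) {v : ℕ} (h1 : 1 ≤ v) (h2 : v ≤ cells.card) :
    ∃ c ∈ cells, T c = v :=
  hT.bijOn.surjOn ⟨h1, h2⟩

lemma mem_descents (hT : IsSYT cells T) {c c' : ℕ × ℕ} (hc : c ∈ cells) (hc' : c' ∈ cells)
    (hsucc : T c' = T c + 1) (hlt : c.1 < c'.1) : T c ∈ descents cells T := by
  have := (hT.apply_mem_Icc hc).2
  simp only [descents, Finset.mem_filter, Finset.mem_range]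
  exact ⟨by omega, c, hc, c', hc', rfl, hsucc, hlt⟩

lemma fst_le_of_descents_lt (hT : IsSYT cells T) {v : ℕ}
    (hd : ∀ d ∈ descents cells T, d < v) {c c' : ℕ × ℕ} (hc : c ∈ cells) (hc' : c' ∈ cells)
    (hv : v ≤ T c) (hle : T c ≤ T c') : c'.1 ≤ c.1 := by
  obtain ⟨k, hk⟩ := Nat.exists_eq_add_of_le hle
  induction k generalizing c' with
  | zero => rw [hT.bijOn.injOn hc' hc (by simpa using hk)]
  | succ k ih =>
    have hc'le := (hT.apply_mem_Icc hc').2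
    have := (hT.apply_mem_Icc hc).1
    obtain ⟨c'', hc'', hk''⟩ := hT.exists_apply_eq (v := T c + k) (by omega) (by omega)
    have hrow := ih hc'' (by omega) hk''
    by_contra! hlt
    have := hd _ (hT.mem_descents hc'' hc' (by omega) (by omega))
    omega

lemma fst_eq_zero_of_majN_le (hup : ∀ i k, (i + 1, k) ∈ cells → (i, k) ∈ cells)
    (hT : IsSYT cells T) (hmaj : majN cells T ≤ s) (hs : 2 * s < cells.card)
    {m : ℕ × ℕ} (hm : m ∈ cells) (hmv : T m = cells.card) : m.1 = 0 := by
  have hd : ∀ d ∈ descents cells T, d < s + 1 := fun d hd =>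
    Nat.lt_succ_of_le ((Finset.single_le_sum (fun i _ => Nat.zero_le i) hd).trans hmaj)
  by_contra hm0
  have hsplit := Finset.card_filter_add_card_filter_not (s := cells) (T · ≤ s)
  set small := cells.filter (T · ≤ s)
  set big := cells.filter (¬ T · ≤ s)
  have hsmall : small.card ≤ s := by
    simpa using Finset.card_le_card_of_injOn T
      (fun c hc => Finset.mem_Icc.mpr ⟨(hT.apply_mem_Icc (Finset.mem_filter.mp hc).1).1,
        (Finset.mem_filter.mp hc).2⟩)
      (hT.bijOn.injOn.mono (Finset.coe_subset.mpr (Finset.filter_subset _ _)))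
  have hbelow : ∀ c ∈ big, 1 ≤ c.1 ∧ (c.1 - 1, c.2) ∈ small := by
    intro c hc
    obtain ⟨hc, hcs⟩ := Finset.mem_filter.mp hc
    have hrow := hT.fst_le_of_descents_lt hd hc hm (by omega) (hmv ▸ (hT.apply_mem_Icc hc).2)
    obtain ⟨_ | i, k⟩ := c
    · exact absurd hrow (by simpa using hm0)
    show 1 ≤ i + 1 ∧ (i, k) ∈ small
    have hup' := hup i k hc
    have hlt := hT.col_strict _ hup' _ hc rfl (Nat.lt_succ_self i)
    refine ⟨Nat.succ_pos i, Finset.mem_filter.mpr ⟨hup', ?_⟩⟩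
    by_contra hbig
    have := hT.fst_le_of_descents_lt hd hup' hc (by omega) hlt.le
    exact absurd this (by simp)
  have hbig : big.card ≤ small.card :=
    Finset.card_le_card_of_injOn (fun c => (c.1 - 1, c.2)) (fun c hc => (hbelow c hc).2)
      fun a ha b hb hab => by
        have := (hbelow a ha).1
        have := (hbelow b hb).1
        simp only [Prod.mk.injEq] at hab
        exact Prod.ext (by omega) hab.2
  omega

lemma apply_eq_card_of_majN_le (hup : ∀ i k, (i + 1, k) ∈ cells → (i, k) ∈ cells)
    (hT : IsSYT cells T) (hmaj : majN cells T ≤ s) (hs : 2 * s < cells.card)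
    (hj : ∀ c ∈ cells, c.2 ≤ j) (hmem : (0, j) ∈ cells) : T (0, j) = cells.card := by
  obtain ⟨m, hm, hmv⟩ := hT.exists_apply_eq (v := cells.card) (by omega) le_rfl
  have hm0 := hT.fst_eq_zero_of_majN_le hup hmaj hs hm hmv
  obtain hlt | heq := (hj m hm).lt_or_eq
  · have := hT.row_strict m hm _ hmem hm0 hlt
    have := (hT.apply_mem_Icc hmem).2
    omega
  · have : m = (0, j) := Prod.ext hm0 heq
    rwa [← this]

lemma insert_update (hT : IsSYT cells T) (hj : ∀ c ∈ cells, c.2 < j) :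
    IsSYT (insert (0, j) cells) (update T (0, j) (cells.card + 1)) := by
  have ha : (0, j) ∉ cells := fun h => (hj _ h).false
  have hT' : ∀ c ∈ cells, update T (0, j) (cells.card + 1) c = T c :=
    fun c hc => update_of_ne (ne_of_mem_of_not_mem hc ha) _ _
  constructor
  · have hIcc : insert (cells.card + 1) (Set.Icc 1 cells.card) = Set.Icc 1 (cells.card + 1) := by
      ext; simp only [Set.mem_insert_iff, Set.mem_Icc]; omega
    rw [Finset.coe_insert, Finset.card_insert_of_notMem ha, ← hIcc]
    have := (hT.bijOn.congr fun c hc => (hT' c hc).symm).insert (a := (0, j)) (by simp)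
    rwa [update_self] at this
  · simp only [Finset.mem_insert]
    rintro c1 (rfl | h1) c2 (rfl | h2) hrow hcol
    · exact absurd hcol (lt_irrefl _)
    · have := hj c2 h2
      omega
    · rw [update_self, hT' c1 h1]
      exact Nat.lt_succ_of_le (hT.apply_mem_Icc h1).2
    · rw [hT' c1 h1, hT' c2 h2]
      exact hT.row_strict c1 h1 c2 h2 hrow hcol
  · simp only [Finset.mem_insert]
    rintro c1 (rfl | h1) c2 (rfl | h2) hcol hrow
    · exact absurd hrow (lt_irrefl _)
    · exact ((hj c2 h2).ne hcol.symm).elim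
    · exact absurd hrow (Nat.not_lt_zero _)
    · rw [hT' c1 h1, hT' c2 h2]
      exact hT.col_strict c1 h1 c2 h2 hcol hrow
  · intro c hc
    rw [Finset.mem_insert, not_or] at hc
    rw [update_of_ne hc.1]
    exact hT.zeros c hc.2

lemma update_zero {a : ℕ × ℕ} (hU : IsSYT (insert a cells) U) (ha : a ∉ cells)
    (hUa : U a = cells.card + 1) : IsSYT cells (update U a 0) := by
  have hU' : ∀ c ∈ cells, update U a 0 c = U c :=
    fun c hc => update_of_ne (ne_of_mem_of_not_mem hc ha) _ _
  have hsub : ∀ c ∈ cells, c ∈ insert a cells := fun c => Finset.mem_insert_of_mem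
  constructor
  · have := hU.bijOn.sdiff_singleton (a := a) (by simp)
    have hIcc : Set.Icc 1 (cells.card + 1) \ {cells.card + 1} = Set.Icc 1 cells.card := by
      ext; simp only [Set.mem_sdiff, Set.mem_Icc, Set.mem_singleton_iff]; omega
    rw [Finset.coe_insert, Set.insert_sdiff_self_of_notMem (by simpa using ha), hUa,
      Finset.card_insert_of_notMem ha, hIcc] at this
    exact this.congr fun c hc => (hU' c hc).symm
  · intro c1 h1 c2 h2 hrow hcol
    rw [hU' c1 h1, hU' c2 h2]
    exact hU.row_strict c1 (hsub c1 h1) c2 (hsub c2 h2) hrow hcol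
  · intro c1 h1 c2 h2 hcol hrow
    rw [hU' c1 h1, hU' c2 h2]
    exact hU.col_strict c1 (hsub c1 h1) c2 (hsub c2 h2) hcol hrow
  · intro c hc
    by_cases hca : c = a
    · rw [hca, update_self]
    · rw [update_of_ne hca]
      exact hU.zeros c (by simp [hca, hc])

end IsSYT

variable {cells : Finset (ℕ × ℕ)} {T : ℕ × ℕ → ℕ} {j s : ℕ}

lemma descents_insert_update (hT : IsSYT cells T) (ha : (0, j) ∉ cells) :
    descents (insert (0, j) cells) (update T (0, j) (cells.card + 1)) = descents cells T := by
  have hT' : ∀ c ∈ cells, update T (0, j) (cells.card + 1) c = T c :=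
    fun c hc => update_of_ne (ne_of_mem_of_not_mem hc ha) _ _
  ext i
  simp only [descents, Finset.mem_filter, Finset.mem_range, Finset.card_insert_of_notMem ha,
    Finset.mem_insert]
  constructor
  · rintro ⟨-, c1, h1, c2, h2, e1, e2, hlt⟩
    obtain rfl | h2 := h2
    · exact absurd hlt (Nat.not_lt_zero _)
    rw [hT' c2 h2] at e2
    have := (hT.apply_mem_Icc h2).2
    obtain rfl | h1 := h1
    · rw [update_self] at e1
      omega
    rw [hT' c1 h1] at e1
    exact ⟨by omega, c1, h1, c2, h2, e1, e2, hlt⟩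
  · rintro ⟨hi, c1, h1, c2, h2, e1, e2, hlt⟩
    exact ⟨by omega, c1, Or.inr h1, c2, Or.inr h2, (hT' c1 h1).trans e1,
      (hT' c2 h2).trans e2, hlt⟩

theorem bijOn_update_insert (hj : ∀ c ∈ cells, c.2 < j)
    (hup : ∀ i k, (i + 1, k) ∈ insert (0, j) cells → (i, k) ∈ insert (0, j) cells)
    (hs : 2 * s ≤ cells.card) :
    Set.BijOn (fun T : ℕ × ℕ → ℕ => update T (0, j) (cells.card + 1))
      {T | IsSYT cells T ∧ majN cells T ≤ s}
      {U | IsSYT (insert (0, j) cells) U ∧ majN (insert (0, j) cells) U ≤ s} := by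
  have ha : (0, j) ∉ cells := fun h => (hj _ h).false
  refine ⟨?_, ?_, ?_⟩
  · rintro T ⟨hT, hmaj⟩
    exact ⟨hT.insert_update hj, by rwa [majN, descents_insert_update hT ha]⟩
  · rintro T₁ ⟨hT₁, -⟩ T₂ ⟨hT₂, -⟩ h
    rw [← update_eq_self (0, j) T₁, ← update_eq_self (0, j) T₂, hT₁.zeros _ ha, hT₂.zeros _ ha,
      ← update_idem (cells.card + 1), ← update_idem (cells.card + 1) 0 T₂]
    exact congrArg (update · (0, j) 0) h
  · rintro U ⟨hU, hmaj⟩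
    have hUa : U (0, j) = cells.card + 1 := by
      rw [← Finset.card_insert_of_notMem ha]
      refine hU.apply_eq_card_of_majN_le hup hmaj ?_ ?_ (Finset.mem_insert_self _ _)
      · rw [Finset.card_insert_of_notMem ha]; omega
      · simp only [Finset.mem_insert, forall_eq_or_imp, le_refl, true_and]
        exact fun c hc => (hj c hc).le
    have hT := hU.update_zero ha hUa
    have hback : update (update U (0, j) 0) (0, j) (cells.card + 1) = U := by
      rw [update_idem, ← hUa, update_eq_self]
    refine ⟨_, ⟨hT, ?_⟩, hback⟩
    rwa [majN, ← descents_insert_update hT ha, hback]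

/-- for `n > 2s` and `n ≥ |μ| + μ₁`, the map adding a box labeled
`n + 1` at the end of the first row is a bijection from standard Young tableaux
of shape `μ[n]` with `maj ≤ s` onto standard Young tableaux of shape `μ[n+1]`
with `maj ≤ s`. -/
theorem stmt4 (μ : YoungDiagram) (s n : ℕ) (hn1 : 2 * s < n)
    (hn2 : μ.card + μ.rowLen 0 ≤ n) :
    Set.BijOn (fun T : ℕ × ℕ → ℕ => Function.update T ((0 : ℕ), n - μ.card) (n + 1))
      {T | IsSYT (paddedCells μ n) T ∧ majN (paddedCells μ n) T ≤ s}
      {U | IsSYT (paddedCells μ (n + 1)) U ∧ majN (paddedCells μ (n + 1)) U ≤ s} := by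
  have hcard : μ.card ≤ n := le_of_add_le_left hn2
  have hsucc := paddedCells_succ hcard
  have key := bijOn_update_insert (s := s) (fun c => snd_lt_of_mem_paddedCells hn2)
    (hsucc ▸ fun i k => mem_paddedCells_of_succ_mem (by omega))
    (by rw [card_paddedCells hcard]; omega)
  rwa [← hsucc, card_paddedCells hcard] at key
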